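/- arXiv:1301.2691 — 6 statements merged into one kernel-verified Lean document; each statement's English description precedes it below -/
import Mathlib

section
/- With the Pascal automaton of period p coprime with b and final states R × Z/ψZ (for R ⊆ Z/pZ), a word u is accepted if and only if val(u) mod p ∈ R. Consequently the set of numbers accepted by the Pascal automaton is exactly {n ∈ ℕ : n mod p ∈ R}. -/
/-- Value of a word of digits, read least-significant-digit-first. -/
def wordVal (b : ℕ) : List ℕ → ℕ
  | [] => 0
  | a :: u => a + b * wordVal b u

/-- Transition function of the Pascal automaton: `(s,t)·a = (s + a·b^t, t+1)`. -/
def pascalStep (b p ψ : ℕ) (q : ZMod p × ZMod ψ) (a : ℕ) : ZMod p × ZMod ψ :=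
  (q.1 + (a : ZMod p) * (b : ZMod p) ^ q.2.val, q.2 + 1)

/-!
Reading a word `u` from the state `(s, t)` leads to a state with first component
`s + val(u) · b^t`: the second component counts the digits read modulo the order `ψ` of `b`,
which is exactly the information needed to compute the weight `b^t` of the next digit.
Hence from `(0, 0)` the first component is `val(u) mod p`, and every `n` is the value of its
base-`b` expansion.
-/

lemma wordVal_eq_ofDigits (b : ℕ) (u : List ℕ) : wordVal b u = Nat.ofDigits b u := by
  induction u with
  | nil => rfl
  | cons a u ih => rw [wordVal, Nat.ofDigits_cons, ih]

lemma pow_val_natCast_orderOf {M : Type*} [Monoid M] (x : M) (n : ℕ) :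
    x ^ (n : ZMod (orderOf x)).val = x ^ n := by
  rw [ZMod.val_natCast, pow_mod_orderOf]

lemma foldl_pascalStep_fst (b p : ℕ) (u : List ℕ) (s : ZMod p) (t : ℕ) :
    (u.foldl (pascalStep b p (orderOf (b : ZMod p))) (s, t)).1 =
      s + wordVal b u * (b : ZMod p) ^ t := by
  induction u generalizing s t with
  | nil => simp [wordVal]
  | cons a u ih =>
    have hnext : pascalStep b p (orderOf (b : ZMod p)) (s, t) a =
        (s + a * (b : ZMod p) ^ t, ((t + 1 : ℕ) : ZMod (orderOf (b : ZMod p)))) := by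
      rw [pascalStep, pow_val_natCast_orderOf, Nat.cast_succ]
    rw [List.foldl_cons, hnext, ih, wordVal]
    push_cast
    ring

lemma foldl_pascalStep_fst_initial (b p : ℕ) (u : List ℕ) :
    (u.foldl (pascalStep b p (orderOf (b : ZMod p))) (0, 0)).1 = wordVal b u := by
  simpa using foldl_pascalStep_fst b p u 0 0

theorem pascal_accepts_general (b p ψ : ℕ) (hb : 2 ≤ b)
    (hψ : ψ = orderOf (b : ZMod p))
    (R : Set (ZMod p)) :
    (∀ u : List ℕ, (∀ d ∈ u, d < b) →
        ((List.foldl (pascalStep b p ψ) (0, 0) u).1 ∈ R ↔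
          ((wordVal b u : ZMod p)) ∈ R)) ∧
    (∀ n : ℕ,
        (∃ u : List ℕ, (∀ d ∈ u, d < b) ∧ wordVal b u = n ∧
            (List.foldl (pascalStep b p ψ) (0, 0) u).1 ∈ R) ↔
          ((n : ZMod p)) ∈ R) := by
  subst hψ
  refine ⟨fun u _ => by rw [foldl_pascalStep_fst_initial], fun n => ⟨?_, fun hn => ?_⟩⟩
  · rintro ⟨u, -, rfl, hu⟩
    rwa [foldl_pascalStep_fst_initial] at hu
  · have hdigits : wordVal b (Nat.digits b n) = n := by
      rw [wordVal_eq_ofDigits, Nat.ofDigits_digits]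
    refine ⟨Nat.digits b n, fun d hd => Nat.digits_lt_base hb hd, hdigits, ?_⟩
    rwa [foldl_pascalStep_fst_initial, hdigits]

/-- With final states `R × ZMod ψ`, a word is accepted by the Pascal automaton
iff its value mod `p` lies in `R`; hence the set of accepted numbers is
`{n | n mod p ∈ R}`. -/
theorem pascal_accepts (b p ψ : ℕ) (hb : 2 ≤ b) (hp : 1 ≤ p)
    (hcop : Nat.Coprime b p) (hψ : ψ = orderOf (b : ZMod p))
    (R : Set (ZMod p)) :
    (∀ u : List ℕ, (∀ d ∈ u, d < b) →
        ((List.foldl (pascalStep b p ψ) (0, 0) u).1 ∈ R ↔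
          ((wordVal b u : ZMod p)) ∈ R)) ∧
    (∀ n : ℕ,
        (∃ u : List ℕ, (∀ d ∈ u, d < b) ∧ wordVal b u = n ∧
            (List.foldl (pascalStep b p ψ) (0, 0) u).1 ∈ R) ↔
          ((n : ZMod p)) ∈ R) :=
  pascal_accepts_general b p ψ hb hψ R
end

section
/- Let φ be a surjective automaton morphism (covering) from the modified Pascal automaton P'_{R,p} (with canonical parameters: p the smallest period and R the corresponding residues) onto a deterministic automaton A'. If (x,y) and (x',y') are states of P'_{R,p} with x ≠ x' and φ(x,y) = φ(x',y'), then y ≠ y'. -/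
/-!
Reading `g` while staying in row `y` translates the first coordinate by the unit `b ^ y`, so its
iterates move through every residue mod `p`. If `φ (x, y) = φ (x', y)`, applying the same words
to both states shows that membership in `R` is invariant under translation by `x' - x`; by
canonicity of `(p, R)` this forces `x = x'`.
-/

/-- Action of letter `0` in the modified Pascal automaton: `(s,t) ↦ (s, t+1)`. -/
def mpZero (p ψ : ℕ) (q : ZMod p × ZMod ψ) : ZMod p × ZMod ψ := (q.1, q.2 + 1)

/-- Action of letter `g` in the modified Pascal automaton: `(s,t) ↦ (s + b^t, t)`. -/
def mpG (b p ψ : ℕ) (q : ZMod p × ZMod ψ) : ZMod p × ZMod ψ :=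
  (q.1 + (b : ZMod p) ^ q.2.val, q.2)

theorem mpG_iterate (b p ψ k : ℕ) (x : ZMod p) (y : ZMod ψ) :
    (mpG b p ψ)^[k] (x, y) = (x + k * (b : ZMod p) ^ y.val, y) := by
  induction k with
  | zero => simp
  | succ k ih =>
    rw [Function.iterate_succ_apply', ih, mpG]
    ext <;> push_cast <;> ring

theorem ZMod.exists_natCast_mul_eq {p : ℕ} [NeZero p] {c : ZMod p} (hc : IsUnit c)
    (a : ZMod p) : ∃ k : ℕ, (k : ZMod p) * c = a :=
  ⟨(a * hc.unit⁻¹).val, by simp [mul_assoc]⟩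

theorem ZMod.eq_zero_of_forall_mem_iff_add_mem {p : ℕ} [NeZero p] {R : Set (ZMod p)}
    (hcan : ∀ q : ℕ, 0 < q → q < p →
      ∃ n : ℕ, ¬ (((n : ZMod p) ∈ R) ↔ (((n + q : ℕ) : ZMod p) ∈ R)))
    {d : ZMod p} (hd : ∀ s, s ∈ R ↔ s + d ∈ R) : d = 0 := by
  by_contra hd0
  obtain ⟨n, hn⟩ := hcan d.val (ZMod.val_pos.mpr hd0) (ZMod.val_lt d)
  apply hn
  rw [Nat.cast_add, ZMod.natCast_zmod_val]
  exact hd n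

theorem mem_iff_add_sub_mem_of_map_eq {b p ψ : ℕ} [NeZero p] (hcop : Nat.Coprime b p)
    {R : Set (ZMod p)} {Q' : Type} {g' : Q' → Q'} {F' : Set Q'}
    {φ : ZMod p × ZMod ψ → Q'} (hg : Function.Semiconj φ (mpG b p ψ) g')
    (hF : ∀ q : ZMod p × ZMod ψ, q.1 ∈ R ↔ φ q ∈ F')
    {x x' : ZMod p} {y : ZMod ψ} (heq : φ (x, y) = φ (x', y)) (s : ZMod p) :
    s ∈ R ↔ s + (x' - x) ∈ R := by
  have hunit : IsUnit ((b : ZMod p) ^ y.val) :=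
    ((ZMod.isUnit_iff_coprime b p).mpr hcop).pow _
  obtain ⟨k, hk⟩ := ZMod.exists_natCast_mul_eq hunit (s - x)
  have hsame : φ ((mpG b p ψ)^[k] (x, y)) = φ ((mpG b p ψ)^[k] (x', y)) := by
    rw [hg.iterate_right k, hg.iterate_right k, heq]
  rw [mpG_iterate, mpG_iterate, hk] at hsame
  have hs : x + (s - x) = s := by ring
  have hs' : x' + (s - x) = s + (x' - x) := by ring
  rw [hs, hs'] at hsame
  rw [hF (s, y), hF (s + (x' - x), y), hsame]

theorem covering_separates_rows_general (b p ψ : ℕ) (hp : 1 ≤ p)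
    (hcop : Nat.Coprime b p)
    (R : Set (ZMod p))
    -- `(p, R)` is canonical: no positive `q < p` is a period of `{n | n mod p ∈ R}`
    (hcan : ∀ q : ℕ, 0 < q → q < p →
      ∃ n : ℕ, ¬ (((n : ZMod p) ∈ R) ↔ (((n + q : ℕ) : ZMod p) ∈ R)))
    {Q' : Type} (g' : Q' → Q') (F' : Set Q')
    (φ : ZMod p × ZMod ψ → Q')
    (hg : ∀ q, φ (mpG b p ψ q) = g' (φ q))
    (hF : ∀ q : ZMod p × ZMod ψ, q.1 ∈ R ↔ φ q ∈ F') :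
    ∀ (x x' : ZMod p) (y y' : ZMod ψ),
      x ≠ x' → φ (x, y) = φ (x', y') → y ≠ y' := by
  rintro x x' y y' hxx heq rfl
  have : NeZero p := ⟨by omega⟩
  have hd := ZMod.eq_zero_of_forall_mem_iff_add_mem hcan
    (mem_iff_add_sub_mem_of_map_eq hcop hg hF heq)
  exact hxx (sub_eq_zero.mp hd).symm

/-- If `φ` is a covering from the modified Pascal automaton `P'_{R,p}` (with
canonical parameters) onto a deterministic automaton `A'`, then two distinct
states with the same image have distinct second components. -/
theorem covering_separates_rows (b p ψ : ℕ) (hb : 2 ≤ b) (hp : 1 ≤ p)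
    (hcop : Nat.Coprime b p) (hψ : ψ = orderOf (b : ZMod p))
    (R : Set (ZMod p))
    -- `(p, R)` is canonical: no positive `q < p` is a period of `{n | n mod p ∈ R}`
    (hcan : ∀ q : ℕ, 0 < q → q < p →
      ∃ n : ℕ, ¬ (((n : ZMod p) ∈ R) ↔ (((n + q : ℕ) : ZMod p) ∈ R)))
    {Q' : Type} (z' g' : Q' → Q') (F' : Set Q')
    (φ : ZMod p × ZMod ψ → Q')
    (hsurj : Function.Surjective φ)
    (hz : ∀ q, φ (mpZero p ψ q) = z' (φ q))
    (hg : ∀ q, φ (mpG b p ψ q) = g' (φ q))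
    (hF : ∀ q : ZMod p × ZMod ψ, q.1 ∈ R ↔ φ q ∈ F') :
    ∀ (x x' : ZMod p) (y y' : ZMod ψ),
      x ≠ x' → φ (x, y) = φ (x', y') → y ≠ y' :=
  covering_separates_rows_general b p ψ hp hcop R hcan g' F' φ hg hF
end

section
/- Let φ be a covering from the modified Pascal automaton P'_{R,p} onto a minimal automaton A' with initial state i. Then p equals the length of the g-circuit of A' containing i, and R = { r : i·g^r is final }. -/
/-- Run of the automaton `A'` over the alphabet `{0, g}` (encoded as `Bool`,
`false` being `0` and `true` being `g`). -/
def runB {Q' : Type} (z' g' : Q' → Q') (q : Q') (w : List Bool) : Q' :=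
  List.foldl (fun q a => if a then g' q else z' q) q w

/-!
On the row `t = 0` the letter `g` acts as `s ↦ s + 1`, so `i·gⁿ = φ(n mod p, 0)`, and this
state is final iff `n mod p ∈ R`. Hence `i·gᵖ = i`, and a shorter circuit length `k` would
make `R` invariant under translation by `k`, which canonicity of `(p, R)` forbids.
-/

lemma mpG_mk_zero (b p ψ : ℕ) (s : ZMod p) : mpG b p ψ (s, 0) = (s + 1, 0) := by
  simp [mpG]

lemma iterate_mpG_mk_zero (b p ψ n : ℕ) (s : ZMod p) :
    (mpG b p ψ)^[n] (s, 0) = (s + n, 0) := by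
  induction n generalizing s with
  | zero => simp
  | succ n ih =>
    rw [Function.iterate_succ_apply, mpG_mk_zero, ih, Nat.cast_succ, add_assoc,
      add_comm (1 : ZMod p)]

lemma iterate_apply_zero_zero_of_semiconj {b p ψ : ℕ} {Q' : Type} {g' : Q' → Q'}
    {φ : ZMod p × ZMod ψ → Q'} (hg : Function.Semiconj φ (mpG b p ψ) g') (n : ℕ) :
    g'^[n] (φ (0, 0)) = φ ((n : ZMod p), 0) := by
  rw [← hg.iterate_right n (0, 0), iterate_mpG_mk_zero, zero_add]

theorem parameters_read_in_quotient_general (b p ψ : ℕ) (hp : 1 ≤ p)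
    (R : Set (ZMod p))
    (hcan : ∀ q : ℕ, 0 < q → q < p →
      ∃ n : ℕ, ¬ (((n : ZMod p) ∈ R) ↔ (((n + q : ℕ) : ZMod p) ∈ R)))
    {Q' : Type} (g' : Q' → Q') (F' : Set Q')
    (φ : ZMod p × ZMod ψ → Q')
    (hg : ∀ q, φ (mpG b p ψ q) = g' (φ q))
    (hF : ∀ q : ZMod p × ZMod ψ, q.1 ∈ R ↔ φ q ∈ F') :
    IsLeast {k : ℕ | 0 < k ∧ g'^[k] (φ (0, 0)) = φ (0, 0)} p ∧
    R = {r : ZMod p | g'^[r.val] (φ (0, 0)) ∈ F'} := by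
  have : NeZero p := NeZero.of_pos hp
  have orbit := iterate_apply_zero_zero_of_semiconj hg
  have final_iff (n : ℕ) : g'^[n] (φ (0, 0)) ∈ F' ↔ (n : ZMod p) ∈ R := by
    rw [orbit, ← hF]
  refine ⟨⟨⟨hp, by rw [orbit, ZMod.natCast_self]⟩, fun k ⟨hk, hfix⟩ => ?_⟩, ?_⟩
  · by_contra! hlt
    obtain ⟨n, hn⟩ := hcan k hk hlt
    apply hn
    rw [← final_iff, ← final_iff, Function.iterate_add_apply, hfix]
  · ext r
    rw [Set.mem_ofPred_eq, final_iff, ZMod.natCast_zmod_val]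

/-- If `φ` is a covering from the modified Pascal automaton `P'_{R,p}` (with
canonical parameters) onto a minimal automaton `A'` with initial state
`i = φ(0,0)`, then `p` is the length of the `g`-circuit of `A'` containing `i`
and `R = {r | i·g^r ∈ F'}`. -/
theorem parameters_read_in_quotient (b p ψ : ℕ) (hb : 2 ≤ b) (hp : 1 ≤ p)
    (hcop : Nat.Coprime b p) (hψ : ψ = orderOf (b : ZMod p))
    (R : Set (ZMod p))
    (hcan : ∀ q : ℕ, 0 < q → q < p →
      ∃ n : ℕ, ¬ (((n : ZMod p) ∈ R) ↔ (((n + q : ℕ) : ZMod p) ∈ R)))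
    {Q' : Type} (z' g' : Q' → Q') (F' : Set Q')
    (φ : ZMod p × ZMod ψ → Q')
    (hsurj : Function.Surjective φ)
    (hz : ∀ q, φ (mpZero p ψ q) = z' (φ q))
    (hg : ∀ q, φ (mpG b p ψ q) = g' (φ q))
    (hF : ∀ q : ZMod p × ZMod ψ, q.1 ∈ R ↔ φ q ∈ F')
    -- minimality of `A'`: accessibility and separation of states
    (hacc : ∀ q : Q', ∃ w : List Bool, runB z' g' (φ (0, 0)) w = q)
    (hsep : ∀ q₁ q₂ : Q',
      (∀ w : List Bool, runB z' g' q₁ w ∈ F' ↔ runB z' g' q₂ w ∈ F') → q₁ = q₂) :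
    IsLeast {k : ℕ | 0 < k ∧ g'^[k] (φ (0, 0)) = φ (0, 0)} p ∧
    R = {r : ZMod p | g'^[r.val] (φ (0, 0)) ∈ F'} :=
  parameters_read_in_quotient_general b p ψ hp R hcan g' F' φ hg hF
end

section
/- Let G = Z/pZ ⋊ Z/ψZ be the semidirect product with multiplication (s,t)(x,y) = (x·b^t + s, y + t). Let φ : P'_{R,p} → A' be a covering, and let (s,t) be a state φ-equivalent to (0,0) with smallest positive second component t. Then the φ-equivalence class of (0,0) is exactly the orbit of (0,0) under left multiplication by (s,t). -/
/-- Left multiplication by `(s,t)` in the semidirect product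
`Z/pZ ⋊ Z/ψZ`: `(s,t)(x,y) = (x·b^t + s, y + t)`. -/
def lmulST (b p ψ : ℕ) (s : ZMod p) (t : ZMod ψ) (q : ZMod p × ZMod ψ) :
    ZMod p × ZMod ψ :=
  (q.1 * (b : ZMod p) ^ t.val + s, q.2 + t)

/-!
The `φ`-classes are a right congruence for the semidirect product, because right multiplication
by `(x, y)` is the word `gˣ 0ʸ` of the automaton. So the class `C` of `(0,0)` is stable under left
multiplication by its elements, in particular by `(s,t)`, which gives `orbit ⊆ C`. Canonicity of
`R` rules out a nontrivial element `(x, 0)` of `C`; dividing one element of `C` by another with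
the same second component then shows that an element of `C` is determined by its second
component. Finally, minimality of `t` forces every second component in `C` to be a multiple of
`t`, and all such multiples are attained on the orbit.
-/

namespace PascalOrbit

def sdMul (b p ψ : ℕ) (u w : ZMod p × ZMod ψ) : ZMod p × ZMod ψ :=
  (w.1 * (b : ZMod p) ^ u.2.val + u.1, u.2 + w.2)

variable {b p ψ : ℕ}

@[simp]
lemma sdMul_zero_left (w : ZMod p × ZMod ψ) : sdMul b p ψ (0, 0) w = w := by
  simp [sdMul]

@[simp]
lemma sdMul_zero_right (u : ZMod p × ZMod ψ) : sdMul b p ψ u (0, 0) = u := by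
  simp [sdMul]

lemma lmulST_eq_sdMul (s : ZMod p) (t : ZMod ψ) (q : ZMod p × ZMod ψ) :
    lmulST b p ψ s t q = sdMul b p ψ (s, t) q := by
  simp [lmulST, sdMul, add_comm]

lemma iterate_mpG (k : ℕ) (u : ZMod p × ZMod ψ) :
    (mpG b p ψ)^[k] u = (u.1 + k * (b : ZMod p) ^ u.2.val, u.2) := by
  induction k with
  | zero => simp
  | succ k ih =>
    rw [Function.iterate_succ_apply', ih]
    simp only [mpG, Nat.cast_succ]
    ring_nf

lemma iterate_mpZero (k : ℕ) (u : ZMod p × ZMod ψ) :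
    (mpZero p ψ)^[k] u = (u.1, u.2 + k) := by
  induction k with
  | zero => simp
  | succ k ih =>
    rw [Function.iterate_succ_apply', ih]
    simp only [mpZero, Nat.cast_succ, add_assoc]

lemma sdMul_eq_iterate [NeZero p] [NeZero ψ] (u w : ZMod p × ZMod ψ) :
    sdMul b p ψ u w = (mpZero p ψ)^[w.2.val] ((mpG b p ψ)^[w.1.val] u) := by
  simp only [iterate_mpZero, iterate_mpG, ZMod.natCast_zmod_val, sdMul]
  ring_nf

lemma iterate_lmulST_snd (s : ZMod p) (t : ZMod ψ) (n : ℕ) (q : ZMod p × ZMod ψ) :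
    ((lmulST b p ψ s t)^[n] q).2 = q.2 + n * t := by
  induction n with
  | zero => simp
  | succ n ih =>
    rw [Function.iterate_succ_apply', lmulST, ih, Nat.cast_succ]
    ring

lemma exists_eq_sdMul_of_snd_eq (hb : IsUnit (b : ZMod p)) {u v : ZMod p × ZMod ψ}
    (h : u.2 = v.2) : ∃ x : ZMod p, v = sdMul b p ψ u (x, 0) := by
  obtain ⟨c, hc⟩ := (hb.pow u.2.val).exists_right_inv
  refine ⟨(v.1 - u.1) * c, Prod.ext ?_ ?_⟩
  · simp only [sdMul, mul_assoc, mul_comm c, hc, mul_one, sub_add_cancel]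
  · simp [sdMul, h]

section Covering

variable {Q : Type*} {φ : ZMod p × ZMod ψ → Q}

lemma map_sdMul_congr [NeZero p] [NeZero ψ] {z g : Q → Q}
    (hz : ∀ q, φ (mpZero p ψ q) = z (φ q)) (hg : ∀ q, φ (mpG b p ψ q) = g (φ q))
    {u v : ZMod p × ZMod ψ} (h : φ u = φ v) (w : ZMod p × ZMod ψ) :
    φ (sdMul b p ψ u w) = φ (sdMul b p ψ v w) := by
  have hz' : Function.Semiconj φ (mpZero p ψ) z := hz
  have hg' : Function.Semiconj φ (mpG b p ψ) g := hg
  rw [sdMul_eq_iterate, sdMul_eq_iterate, (hz'.iterate_right _).eq, (hz'.iterate_right _).eq,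
    (hg'.iterate_right _).eq, (hg'.iterate_right _).eq, h]

variable
  (hcong : ∀ u v, φ u = φ v → ∀ w, φ (sdMul b p ψ u w) = φ (sdMul b p ψ v w))
include hcong

lemma map_sdMul_of_map_eq {u : ZMod p × ZMod ψ} (hu : φ u = φ (0, 0)) (w : ZMod p × ZMod ψ) :
    φ (sdMul b p ψ u w) = φ w := by
  rw [hcong u (0, 0) hu w, sdMul_zero_left]

lemma map_iterate_lmulST {s : ZMod p} {t : ZMod ψ} (hst : φ (s, t) = φ (0, 0)) (n : ℕ)
    (q : ZMod p × ZMod ψ) : φ ((lmulST b p ψ s t)^[n] q) = φ q := by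
  induction n with
  | zero => rfl
  | succ n ih =>
    rw [Function.iterate_succ_apply', lmulST_eq_sdMul, map_sdMul_of_map_eq hcong hst, ih]

lemma eq_zero_of_map_eq [NeZero p] {R : Set (ZMod p)} {F : Set Q}
    (hcan : ∀ q : ℕ, 0 < q → q < p →
      ∃ n : ℕ, ¬ (((n : ZMod p) ∈ R) ↔ (((n + q : ℕ) : ZMod p) ∈ R)))
    (hF : ∀ q : ZMod p × ZMod ψ, q.1 ∈ R ↔ φ q ∈ F)
    {x : ZMod p} (hx : φ (x, 0) = φ (0, 0)) : x = 0 := by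
  by_contra hx0
  obtain ⟨n, hn⟩ := hcan x.val (ZMod.val_pos.mpr hx0) (ZMod.val_lt x)
  have hshift : sdMul b p ψ (x, 0) ((n : ZMod p), 0) = (((n + x.val : ℕ) : ZMod p), 0) := by
    simp [sdMul]
  apply hn
  rw [hF ((n : ZMod p), 0), hF (((n + x.val : ℕ) : ZMod p), 0), ← hshift,
    map_sdMul_of_map_eq hcong hx]

lemma eq_of_map_eq_of_snd_eq [NeZero p] (hb : IsUnit (b : ZMod p)) {R : Set (ZMod p)}
    {F : Set Q}
    (hcan : ∀ q : ℕ, 0 < q → q < p →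
      ∃ n : ℕ, ¬ (((n : ZMod p) ∈ R) ↔ (((n + q : ℕ) : ZMod p) ∈ R)))
    (hF : ∀ q : ZMod p × ZMod ψ, q.1 ∈ R ↔ φ q ∈ F)
    {u v : ZMod p × ZMod ψ} (hu : φ u = φ (0, 0)) (hv : φ v = φ (0, 0)) (h : u.2 = v.2) :
    u = v := by
  obtain ⟨x, rfl⟩ := exists_eq_sdMul_of_snd_eq hb h
  rw [map_sdMul_of_map_eq hcong hu] at hv
  rw [eq_zero_of_map_eq hcong hcan hF hv, sdMul_zero_right]

lemma val_dvd_of_map_eq [NeZero ψ] {s : ZMod p} {t : ZMod ψ} (hst : φ (s, t) = φ (0, 0))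
    (ht : t ≠ 0)
    (hmin : ∀ (x : ZMod p) (y : ZMod ψ), φ (x, y) = φ (0, 0) → y ≠ 0 → t.val ≤ y.val)
    {q : ZMod p × ZMod ψ} (hq : φ q = φ (0, 0)) : t.val ∣ q.2.val := by
  set a := q.2.val / t.val
  set r := q.2.val % t.val
  have hr : r < t.val := Nat.mod_lt _ (ZMod.val_pos.mpr ht)
  -- `(ψ - 1) * a` steps of `(s,t)` subtract `a·t` from the second component, leaving `r`
  set q' := (lmulST b p ψ s t)^[(ψ - 1) * a] q
  have hq' : φ (q'.1, q'.2) = φ (0, 0) := (map_iterate_lmulST hcong hst _ q).trans hq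
  have hq'2 : q'.2 = r := by
    have hdecomp : q.2 = ((a * t.val + r : ℕ) : ZMod ψ) := by
      rw [Nat.div_add_mod', ZMod.natCast_zmod_val]
    rw [iterate_lmulST_snd, hdecomp, Nat.cast_mul, Nat.cast_sub NeZero.one_le]
    push_cast
    rw [ZMod.natCast_self, ZMod.natCast_zmod_val]
    ring
  have hrval : q'.2.val = r := by
    rw [hq'2, ZMod.val_natCast_of_lt (hr.trans (ZMod.val_lt t))]
  by_contra hndvd
  have hr0 : q'.2 ≠ 0 := fun h0 => hndvd (Nat.dvd_of_mod_eq_zero (by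
    change r = 0
    rw [← hrval, h0, ZMod.val_zero]))
  have := hmin _ _ hq' hr0
  omega

end Covering

end PascalOrbit

open PascalOrbit in
theorem class_is_orbit_general (b p ψ : ℕ) (hp : 1 ≤ p)
    (hcop : Nat.Coprime b p) (hψ : ψ = orderOf (b : ZMod p))
    (R : Set (ZMod p))
    (hcan : ∀ q : ℕ, 0 < q → q < p →
      ∃ n : ℕ, ¬ (((n : ZMod p) ∈ R) ↔ (((n + q : ℕ) : ZMod p) ∈ R)))
    {Q' : Type} (z' g' : Q' → Q') (F' : Set Q')
    (φ : ZMod p × ZMod ψ → Q')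
    (hz : ∀ q, φ (mpZero p ψ q) = z' (φ q))
    (hg : ∀ q, φ (mpG b p ψ q) = g' (φ q))
    (hF : ∀ q : ZMod p × ZMod ψ, q.1 ∈ R ↔ φ q ∈ F')
    (s : ZMod p) (t : ZMod ψ)
    (hst : φ (s, t) = φ (0, 0)) (ht : t ≠ 0)
    (hmin : ∀ (x : ZMod p) (y : ZMod ψ),
      φ (x, y) = φ (0, 0) → y ≠ 0 → t.val ≤ y.val) :
    {q : ZMod p × ZMod ψ | φ q = φ (0, 0)} =
      {q : ZMod p × ZMod ψ | ∃ n : ℕ, q = (lmulST b p ψ s t)^[n] (0, 0)} := by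
  have : NeZero p := ⟨by omega⟩
  have hb : IsUnit (b : ZMod p) := (ZMod.isUnit_iff_coprime b p).mpr hcop
  have : NeZero ψ := ⟨by
    obtain ⟨u, hu⟩ := hb
    rw [hψ, ← hu, orderOf_units]
    exact (orderOf_pos u).ne'⟩
  have hcong := fun u v (h : φ u = φ v) => map_sdMul_congr hz hg h
  ext q
  constructor
  · intro hq
    obtain ⟨a, ha⟩ := val_dvd_of_map_eq hcong hst ht hmin hq
    refine ⟨a, eq_of_map_eq_of_snd_eq hcong hb hcan hF hq
      (map_iterate_lmulST hcong hst a _) ?_⟩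
    rw [iterate_lmulST_snd, ← ZMod.natCast_zmod_val q.2, ha]
    push_cast [ZMod.natCast_zmod_val]
    ring
  · rintro ⟨n, rfl⟩
    exact map_iterate_lmulST hcong hst n _

/-- If `(s,t)` is the state `φ`-equivalent to `(0,0)` with smallest positive
second component, then the `φ`-class of `(0,0)` is exactly the orbit of `(0,0)`
under left multiplication by `(s,t)`. -/
theorem class_is_orbit (b p ψ : ℕ) (hb : 2 ≤ b) (hp : 1 ≤ p)
    (hcop : Nat.Coprime b p) (hψ : ψ = orderOf (b : ZMod p))
    (R : Set (ZMod p))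
    (hcan : ∀ q : ℕ, 0 < q → q < p →
      ∃ n : ℕ, ¬ (((n : ZMod p) ∈ R) ↔ (((n + q : ℕ) : ZMod p) ∈ R)))
    {Q' : Type} (z' g' : Q' → Q') (F' : Set Q')
    (φ : ZMod p × ZMod ψ → Q')
    (hsurj : Function.Surjective φ)
    (hz : ∀ q, φ (mpZero p ψ q) = z' (φ q))
    (hg : ∀ q, φ (mpG b p ψ q) = g' (φ q))
    (hF : ∀ q : ZMod p × ZMod ψ, q.1 ∈ R ↔ φ q ∈ F')
    (s : ZMod p) (t : ZMod ψ)
    (hst : φ (s, t) = φ (0, 0)) (ht : t ≠ 0)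
    (hmin : ∀ (x : ZMod p) (y : ZMod ψ),
      φ (x, y) = φ (0, 0) → y ≠ 0 → t.val ≤ y.val) :
    {q : ZMod p × ZMod ψ | φ q = φ (0, 0)} =
      {q : ZMod p × ZMod ψ | ∃ n : ℕ, q = (lmulST b p ψ s t)^[n] (0, 0)} :=
  class_is_orbit_general b p ψ hp hcop hψ R hcan z' g' F' φ hz hg hF s t hst ht hmin
end

section
/- If a deterministic automaton A over the digit alphabet is a quotient of the Pascal automaton P_{R,p}, then for every state q of A, the automaton A_q obtained from A by taking q as initial state is a quotient of P_{S,p} for some set of residues S ⊆ Z/pZ. In particular, if the new initial state of a Pascal automaton is (s,t), the resulting automaton equals P_{S,p} with S = { (r−s)·b^{−t} : r ∈ R }, via the state correspondence (x,y) ↦ (s + x·b^t, y + t). -/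
open Function

theorem pow_val_add_of_pow_eq_one {M : Type*} [Monoid M] {n : ℕ} [NeZero n] {x : M}
    (hx : x ^ n = 1) (u v : ZMod n) : x ^ (u + v).val = x ^ u.val * x ^ v.val := by
  rw [ZMod.val_add, ← pow_eq_pow_mod _ hx, pow_add]

theorem ZMod.exists_mem_eq_sub_mul_inv_iff {n : ℕ} {R : Set (ZMod n)} {c : ZMod n}
    (hc : IsUnit c) (s x : ZMod n) : (∃ r ∈ R, x = (r - s) * c⁻¹) ↔ s + x * c ∈ R := by
  constructor
  · rintro ⟨r, hr, rfl⟩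
    rwa [mul_assoc, ZMod.inv_mul_of_unit c hc, mul_one, add_sub_cancel]
  · intro h
    exact ⟨_, h, by rw [add_sub_cancel_left, mul_assoc, ZMod.mul_inv_of_unit c hc, mul_one]⟩

def pascalShift (b p ψ : ℕ) (s : ZMod p) (t : ZMod ψ) (q : ZMod p × ZMod ψ) :
    ZMod p × ZMod ψ :=
  (s + q.1 * (b : ZMod p) ^ t.val, q.2 + t)

section pascalShift

variable {b p ψ : ℕ} {s : ZMod p} {t : ZMod ψ}

theorem pascalShift_zero : pascalShift b p ψ s t (0, 0) = (s, t) := by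
  simp [pascalShift]

theorem pascalShift_bijective (hb : IsUnit (b : ZMod p)) : Bijective (pascalShift b p ψ s t) :=
  ((Equiv.addLeft s).bijective.comp (Units.mulRight_bijective (hb.pow t.val).unit)).prodMap
    (Equiv.addRight t).bijective

theorem pascalShift_pascalStep [NeZero ψ] (hb : (b : ZMod p) ^ ψ = 1)
    (q : ZMod p × ZMod ψ) (a : ℕ) :
    pascalShift b p ψ s t (pascalStep b p ψ q a) = pascalStep b p ψ (pascalShift b p ψ s t q) a := by
  simp only [pascalShift, pascalStep, pow_val_add_of_pow_eq_one hb, Prod.mk.injEq]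
  constructor <;> ring

end pascalShift

theorem quotient_initial_state_change_general (b p ψ : ℕ) (hp : 1 ≤ p)
    (hcop : Nat.Coprime b p) (hψ : ψ = orderOf (b : ZMod p))
    (R : Set (ZMod p))
    {Q : Type} (δ : Q → ℕ → Q) (F : Set Q)
    (φ : ZMod p × ZMod ψ → Q)
    (hsurj : Function.Surjective φ)
    (hstep : ∀ q (a : ℕ), a < b → φ (pascalStep b p ψ q a) = δ (φ q) a)
    (hF : ∀ q : ZMod p × ZMod ψ, q.1 ∈ R ↔ φ q ∈ F) :
    -- every `A_q` is a quotient of some `P_{S,p}`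
    (∀ qA : Q, ∃ S : Set (ZMod p), ∃ φ' : ZMod p × ZMod ψ → Q,
        Function.Surjective φ' ∧ φ' (0, 0) = qA ∧
        (∀ q (a : ℕ), a < b → φ' (pascalStep b p ψ q a) = δ (φ' q) a) ∧
        (∀ q : ZMod p × ZMod ψ, q.1 ∈ S ↔ φ' q ∈ F)) ∧
    -- explicit description for the Pascal automaton itself
    (∀ (s : ZMod p) (t : ZMod ψ),
      ∀ S : Set (ZMod p),
        S = {x : ZMod p | ∃ r ∈ R, x = (r - s) * ((b : ZMod p) ^ t.val)⁻¹} →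
        ∀ θ : ZMod p × ZMod ψ → ZMod p × ZMod ψ,
          θ = (fun q => (s + q.1 * (b : ZMod p) ^ t.val, q.2 + t)) →
          θ (0, 0) = (s, t) ∧ Function.Bijective θ ∧
          (∀ q (a : ℕ), a < b →
            θ (pascalStep b p ψ q a) = pascalStep b p ψ (θ q) a) ∧
          (∀ q : ZMod p × ZMod ψ, q.1 ∈ S ↔ (θ q).1 ∈ R)) := by
  have : NeZero p := ⟨Nat.one_le_iff_ne_zero.mp hp⟩
  have hunit : IsUnit (b : ZMod p) := (ZMod.isUnit_iff_coprime b p).2 hcop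
  have : NeZero ψ := ⟨hψ ▸ hunit.isOfFinOrder.orderOf_pos.ne'⟩
  have hperiod : (b : ZMod p) ^ ψ = 1 := hψ ▸ pow_orderOf_eq_one _
  have hfinal : ∀ s t q, q.1 ∈ {x | ∃ r ∈ R, x = (r - s) * ((b : ZMod p) ^ t.val)⁻¹} ↔
      (pascalShift b p ψ s t q).1 ∈ R := fun s t q =>
    ZMod.exists_mem_eq_sub_mul_inv_iff (hunit.pow t.val) s q.1
  refine ⟨fun qA => ?_, ?_⟩
  · obtain ⟨⟨s, t⟩, rfl⟩ := hsurj qA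
    refine ⟨_, φ ∘ pascalShift b p ψ s t, hsurj.comp (pascalShift_bijective hunit).surjective,
      congrArg φ pascalShift_zero, fun q a ha => ?_, fun q => (hfinal s t q).trans (hF _)⟩
    rw [comp_apply, pascalShift_pascalStep hperiod, hstep _ a ha, comp_apply]
  · rintro s t S rfl θ rfl
    exact ⟨pascalShift_zero, pascalShift_bijective hunit,
      fun q a _ => pascalShift_pascalStep hperiod q a, hfinal s t⟩

/-- If `A` is a quotient (via the covering `φ`) of the Pascal automaton
`P_{R,p}`, then for every state `q` of `A`, the automaton `A_q` (same automaton
with initial state `q`) is a quotient of `P_{S,p}` for some residue set `S`.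
In particular, taking `(s,t)` as new initial state of a Pascal automaton
yields `P_{S,p}` with `S = {(r - s)·b^{-t} | r ∈ R}`, via the state
correspondence `(x,y) ↦ (s + x·b^t, y + t)`. -/
theorem quotient_initial_state_change (b p ψ : ℕ) (hb : 2 ≤ b) (hp : 1 ≤ p)
    (hcop : Nat.Coprime b p) (hψ : ψ = orderOf (b : ZMod p))
    (R : Set (ZMod p))
    {Q : Type} (δ : Q → ℕ → Q) (F : Set Q)
    (φ : ZMod p × ZMod ψ → Q)
    (hsurj : Function.Surjective φ)
    (hstep : ∀ q (a : ℕ), a < b → φ (pascalStep b p ψ q a) = δ (φ q) a)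
    (hF : ∀ q : ZMod p × ZMod ψ, q.1 ∈ R ↔ φ q ∈ F) :
    -- every `A_q` is a quotient of some `P_{S,p}`
    (∀ qA : Q, ∃ S : Set (ZMod p), ∃ φ' : ZMod p × ZMod ψ → Q,
        Function.Surjective φ' ∧ φ' (0, 0) = qA ∧
        (∀ q (a : ℕ), a < b → φ' (pascalStep b p ψ q a) = δ (φ' q) a) ∧
        (∀ q : ZMod p × ZMod ψ, q.1 ∈ S ↔ φ' q ∈ F)) ∧
    -- explicit description for the Pascal automaton itself
    (∀ (s : ZMod p) (t : ZMod ψ),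
      ∀ S : Set (ZMod p),
        S = {x : ZMod p | ∃ r ∈ R, x = (r - s) * ((b : ZMod p) ^ t.val)⁻¹} →
        ∀ θ : ZMod p × ZMod ψ → ZMod p × ZMod ψ,
          θ = (fun q => (s + q.1 * (b : ZMod p) ^ t.val, q.2 + t)) →
          θ (0, 0) = (s, t) ∧ Function.Bijective θ ∧
          (∀ q (a : ℕ), a < b →
            θ (pascalStep b p ψ q a) = pascalStep b p ψ (θ q) a) ∧
          (∀ q : ZMod p × ZMod ψ, q.1 ∈ S ↔ (θ q).1 ∈ R)) :=
  quotient_initial_state_change_general b p ψ hp hcop hψ R δ F φ hsurj hstep hF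
end

section
/- Let φ : A → B be a covering (surjective automaton morphism) between finite deterministic automata. Then every strongly connected component C' of B is the image under φ of some strongly connected component C of A; moreover C can be chosen so that φ restricted to C is a morphism from C onto C' (every internal transition of C' lifts to an internal transition of C). -/
/-- Reachability in a deterministic automaton with transition function `δ`. -/
def Reaches {Q A : Type} (δ : Q → A → Q) (q q' : Q) : Prop :=
  ∃ w : List A, List.foldl δ q w = q'

/-- The strongly connected component of a state. -/
def Scc {Q A : Type} (δ : Q → A → Q) (q : Q) : Set Q :=
  {q' | Reaches δ q q' ∧ Reaches δ q' q}

/-!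
Pick `qA` in the fibre `φ⁻¹(qB)` from which the fewest states are reachable. Then every state of
the fibre reachable from `qA` reaches `qA` back. Since `A` is deterministic, every path of `B`
lifts along `φ` from any preimage of its start; a cycle through `qB` lifts to a path from `qA`
back into the fibre, hence back to `qA`, so everything on it lies in the SCC of `qA`.
-/

namespace Reaches

variable {Q A : Type} {δ : Q → A → Q}

theorem refl (q : Q) : Reaches δ q q := ⟨[], rfl⟩

theorem trans {p q r : Q} (hpq : Reaches δ p q) (hqr : Reaches δ q r) : Reaches δ p r := by
  obtain ⟨u, rfl⟩ := hpq
  obtain ⟨v, rfl⟩ := hqr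
  exact ⟨u ++ v, List.foldl_append⟩

theorem step (q : Q) (a : A) : Reaches δ q (δ q a) := ⟨[a], rfl⟩

theorem exists_reaches_back [Finite Q] (δ : Q → A → Q) {s : Set Q} (hs : s.Nonempty) :
    ∃ q ∈ s, ∀ p ∈ s, Reaches δ q p → Reaches δ p q := by
  obtain ⟨q, hq, hmin⟩ := s.exists_min_image (fun q => {r | Reaches δ q r}.ncard)
    s.toFinite hs
  refine ⟨q, hq, fun p hp hqp => ?_⟩
  have hsub : {r | Reaches δ p r} ⊆ {r | Reaches δ q r} := fun r hpr => hqp.trans hpr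
  have heq := Set.eq_of_subset_of_ncard_le hsub (hmin p hp)
  exact (heq.symm ▸ refl q : q ∈ {r | Reaches δ p r})

end Reaches

section Morphism

variable {QA QB A : Type} {δA : QA → A → QA} {δB : QB → A → QB} {φ : QA → QB}

theorem map_foldl_of_hom (hmor : ∀ q a, φ (δA q a) = δB (φ q) a) (q : QA) (w : List A) :
    φ (List.foldl δA q w) = List.foldl δB (φ q) w := by
  induction w generalizing q with
  | nil => rfl
  | cons a w ih => simp only [List.foldl_cons, ih, hmor]

theorem Reaches.map (hmor : ∀ q a, φ (δA q a) = δB (φ q) a) {p q : QA}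
    (h : Reaches δA p q) : Reaches δB (φ p) (φ q) := by
  obtain ⟨w, rfl⟩ := h
  exact ⟨w, (map_foldl_of_hom hmor p w).symm⟩

theorem Reaches.exists_lift (hmor : ∀ q a, φ (δA q a) = δB (φ q) a) {p : QA} {s : QB}
    (h : Reaches δB (φ p) s) : ∃ r, Reaches δA p r ∧ φ r = s := by
  obtain ⟨w, rfl⟩ := h
  exact ⟨List.foldl δA p w, ⟨w, rfl⟩, map_foldl_of_hom hmor p w⟩

theorem image_scc_subset (hmor : ∀ q a, φ (δA q a) = δB (φ q) a) (q : QA) :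
    φ '' Scc δA q ⊆ Scc δB (φ q) := by
  rintro _ ⟨r, ⟨hqr, hrq⟩, rfl⟩
  exact ⟨hqr.map hmor, hrq.map hmor⟩

theorem mem_scc_of_reaches_of_reaches_image (hmor : ∀ q a, φ (δA q a) = δB (φ q) a) {q r : QA}
    (hback : ∀ p, φ p = φ q → Reaches δA q p → Reaches δA p q)
    (hqr : Reaches δA q r) (hrq : Reaches δB (φ r) (φ q)) : r ∈ Scc δA q := by
  obtain ⟨p, hrp, hp⟩ := hrq.exists_lift hmor
  exact ⟨hqr, hrp.trans (hback p hp (hqr.trans hrp))⟩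

end Morphism

theorem scc_lifts_along_covering_general {QA QB A : Type} [Fintype QA]
    (δA : QA → A → QA) (δB : QB → A → QB)
    (φ : QA → QB) (hsurj : Function.Surjective φ)
    (hmor : ∀ q a, φ (δA q a) = δB (φ q) a) :
    ∀ qB : QB, ∃ qA : QA, φ qA = qB ∧
      φ '' Scc δA qA = Scc δB qB ∧
      ∀ r ∈ Scc δA qA, ∀ a : A, δB (φ r) a ∈ Scc δB qB → δA r a ∈ Scc δA qA := by
  intro qB
  obtain ⟨qA, rfl, hback⟩ := Reaches.exists_reaches_back δA (hsurj qB)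
  refine ⟨qA, rfl, (image_scc_subset hmor qA).antisymm ?_, ?_⟩
  · rintro s ⟨hqs, hsq⟩
    obtain ⟨r, hqr, rfl⟩ := hqs.exists_lift hmor
    exact ⟨r, mem_scc_of_reaches_of_reaches_image hmor hback hqr hsq, rfl⟩
  · rintro r ⟨hqr, -⟩ a ⟨-, hrq⟩
    refine mem_scc_of_reaches_of_reaches_image hmor hback (hqr.trans (Reaches.step r a)) ?_
    rwa [hmor]

/-- Let `φ : A → B` be a covering (surjective automaton morphism) between
finite deterministic automata. Every SCC of `B` is the image under `φ` of an
SCC of `A`, which may be chosen so that every internal transition of the SCC of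
`B` lifts to an internal transition of the SCC of `A`. -/
theorem scc_lifts_along_covering {QA QB A : Type} [Fintype QA] [Fintype QB]
    (δA : QA → A → QA) (δB : QB → A → QB)
    (φ : QA → QB) (hsurj : Function.Surjective φ)
    (hmor : ∀ q a, φ (δA q a) = δB (φ q) a) :
    ∀ qB : QB, ∃ qA : QA, φ qA = qB ∧
      φ '' Scc δA qA = Scc δB qB ∧
      ∀ r ∈ Scc δA qA, ∀ a : A, δB (φ r) a ∈ Scc δB qB → δA r a ∈ Scc δA qA :=
  scc_lifts_along_covering_general δA δB φ hsurj hmor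
end
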